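/- Let L be an orthomodular lattice and n ≥ 3. The n-Go equation holds for all elements of L if and only if for all a₁, b₁, a₂, b₂, …, aₙ, bₙ ∈ L satisfying the cyclic orthogonality conditions a₁ ⊥ b₁, b₁ ⊥ a₂, a₂ ⊥ b₂, b₂ ⊥ a₃, …, aₙ ⊥ bₙ, bₙ ⊥ a₁, one has (a₁ ⊔ b₁) ⊓ (a₂ ⊔ b₂) ⊓ ⋯ ⊓ (aₙ ⊔ bₙ) ≤ b₁ ⊔ a₂. -/

import Mathlib

/-- An ortholattice: a bounded lattice with an orthocomplementation. -/
class Ortholattice (α : Type*) extends Lattice α, BoundedOrder α, Compl α where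
  compl_compl : ∀ a : α, aᶜᶜ = a
  compl_le_compl : ∀ a b : α, a ≤ b → bᶜ ≤ aᶜ
  inf_compl_self : ∀ a : α, a ⊓ aᶜ = ⊥
  sup_compl_self : ∀ a : α, a ⊔ aᶜ = ⊤

/-- The Sasaki hook `a → b := a' ⊔ (a ⊓ b)`. -/
def sasaki {α : Type*} [Ortholattice α] (a b : α) : α := aᶜ ⊔ (a ⊓ b)

/-- The Godowski identity `a₁ ≡γ aₙ = (a₁→a₂) ⊓ ⋯ ⊓ (aₙ₋₁→aₙ) ⊓ (aₙ→a₁)`. -/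
def goFwd {α : Type*} [Ortholattice α] (n : ℕ) (hn : 3 ≤ n) (a : Fin n → α) : α :=
  Finset.univ.inf fun i : Fin n => sasaki (a i) (a (i + ⟨1, by omega⟩))

/-- The Godowski identity `aₙ ≡γ a₁ = (aₙ→aₙ₋₁) ⊓ ⋯ ⊓ (a₂→a₁) ⊓ (a₁→aₙ)`. -/
def goBwd {α : Type*} [Ortholattice α] (n : ℕ) (hn : 3 ≤ n) (a : Fin n → α) : α :=
  Finset.univ.inf fun i : Fin n => sasaki (a (i + ⟨1, by omega⟩)) (a i)

/-!
Substituting `aᵢ ↦ aᵢ'` and `bᵢ ↦ aᵢ ⊓ aᵢ₊₁` turns the orthogonality condition into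
`a₁ ≡γ aₙ ≤ a₂ → a₁`; by rotating the indices this single inequality bounds `a₁ ≡γ aₙ` by every
factor of `aₙ ≡γ a₁`, and reversing the order of the indices gives the other inequality.
Conversely, for cyclically orthogonal families the meet of the `aᵢ ⊔ bᵢ` lies below
`a₁' ≡γ aₙ' = aₙ' ≡γ a₁' ≤ a₂' → a₁'`, and since `b₁` commutes with `a₁` and with `a₂' → a₁'`,
orthomodularity gives `(a₂' → a₁') ⊓ (a₁ ⊔ b₁) ≤ b₁ ⊔ a₂`.
-/

namespace Ortholattice

variable {α : Type*} [Ortholattice α] {a b c p x : α}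

theorem compl_anti (h : a ≤ b) : bᶜ ≤ aᶜ := compl_le_compl a b h

theorem le_compl_comm : a ≤ bᶜ ↔ b ≤ aᶜ :=
  ⟨fun h => by simpa only [compl_compl] using compl_anti h,
    fun h => by simpa only [compl_compl] using compl_anti h⟩

theorem compl_sup (a b : α) : (a ⊔ b)ᶜ = aᶜ ⊓ bᶜ :=
  le_antisymm (le_inf (compl_anti le_sup_left) (compl_anti le_sup_right))
    (le_compl_comm.1 (sup_le (le_compl_comm.1 inf_le_left) (le_compl_comm.1 inf_le_right)))

theorem sup_le_sasaki_compl (hab : a ≤ bᶜ) (hbc : b ≤ cᶜ) :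
    a ⊔ b ≤ sasaki aᶜ cᶜ := by
  rw [sasaki, compl_compl]
  exact sup_le_sup_left (le_inf (le_compl_comm.1 hab) hbc) a

def IsOrthomodular (α : Type*) [Ortholattice α] : Prop :=
  ∀ a b : α, a ≤ b → a ⊔ (aᶜ ⊓ b) = b

theorem compl_inf_sup_of_le_compl (h : IsOrthomodular α) (hx : x ≤ aᶜ) :
    aᶜ ⊓ (a ⊔ x) = x := by
  have hx' : xᶜ ⊓ (aᶜ ⊓ (a ⊔ x)) = ⊥ := by
    rw [← inf_assoc, inf_comm xᶜ, ← compl_sup, inf_comm, inf_compl_self]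
  simpa only [hx', sup_bot_eq] using (h x (aᶜ ⊓ (a ⊔ x)) (le_inf hx le_sup_right)).symm

theorem inf_sup_of_le_of_le_compl (h : IsOrthomodular α) (hxp : x ≤ p) (hxa : x ≤ aᶜ) :
    p ⊓ (a ⊔ x) = x ⊔ (p ⊓ a) := by
  have hx : xᶜ ⊓ (p ⊓ (a ⊔ x)) = p ⊓ a := by
    rw [inf_left_comm, sup_comm, compl_inf_sup_of_le_compl h (le_compl_comm.1 hxa)]
  simpa only [hx] using (h x (p ⊓ (a ⊔ x)) (le_inf hxp le_sup_right)).symm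

theorem inf_sasaki_compl_compl_le (h : IsOrthomodular α) (a b : α) :
    a ⊓ sasaki bᶜ aᶜ ≤ b := by
  rw [sasaki, compl_compl]
  calc a ⊓ (b ⊔ (bᶜ ⊓ aᶜ)) ≤ (bᶜ ⊓ aᶜ)ᶜ ⊓ (bᶜ ⊓ aᶜ ⊔ b) :=
        inf_le_inf (le_compl_comm.1 inf_le_right) (sup_comm _ _).le
    _ = b := compl_inf_sup_of_le_compl h (le_compl_comm.1 inf_le_left)

theorem sasaki_compl_inf_sup_le (h : IsOrthomodular α) (hab : a ≤ bᶜ) (hbc : b ≤ cᶜ) :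
    sasaki cᶜ aᶜ ⊓ (a ⊔ b) ≤ b ⊔ c := by
  have hba : b ≤ aᶜ := le_compl_comm.1 hab
  have hb : b ≤ sasaki cᶜ aᶜ := by
    rw [sasaki, compl_compl]
    exact le_sup_of_le_right (le_inf hbc hba)
  rw [inf_sup_of_le_of_le_compl h hb hba, inf_comm]
  exact sup_le_sup_left (inf_sasaki_compl_compl_le h a c) b

end Ortholattice

theorem Finset.inf_univ_comp_equiv {ι κ β : Type*} [Fintype ι] [Fintype κ] [SemilatticeInf β]
    [OrderTop β] (e : ι ≃ κ) (f : κ → β) :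
    Finset.univ.inf (f ∘ e) = Finset.univ.inf f := by
  conv_rhs => rw [← Finset.univ_map_equiv_to_embedding e, Finset.inf_map]
  rfl

theorem Fin.mk_zero_add {n : ℕ} (h : 0 < n) (i : Fin n) : (⟨0, h⟩ : Fin n) + i = i :=
  Fin.ext (by simp [Fin.val_add, Nat.mod_eq_of_lt i.isLt])

section Godowski

variable {α : Type*} [Ortholattice α] {n : ℕ} (hn : 3 ≤ n)

theorem goBwd_le (a : Fin n → α) (i : Fin n) :
    goBwd n hn a ≤ sasaki (a (i + ⟨1, by omega⟩)) (a i) :=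
  Finset.inf_le (Finset.mem_univ i)

theorem goFwd_comp_add_right (a : Fin n → α) (i : Fin n) :
    goFwd n hn (fun j => a (j + i)) = goFwd n hn a := by
  have : NeZero n := ⟨by omega⟩
  rw [goFwd, goFwd]
  refine Eq.trans ?_ (Finset.inf_univ_comp_equiv (Equiv.addRight i) _)
  refine Finset.inf_congr rfl fun j _ => ?_
  simp only [Function.comp_apply, Equiv.coe_addRight, add_right_comm j i]

theorem goBwd_eq_goFwd_comp_neg (a : Fin n → α) :
    goBwd n hn a = goFwd n hn (fun j => a (-j)) := by
  have : NeZero n := ⟨by omega⟩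
  rw [goFwd, goBwd,
    ← Finset.inf_univ_comp_equiv ((Equiv.neg _).trans (Equiv.subRight ⟨1, by omega⟩))]
  refine Finset.inf_congr rfl fun j _ => ?_
  simp only [Function.comp_apply, Equiv.trans_apply, Equiv.neg_apply, Equiv.subRight_apply]
  congr 2 <;> abel

theorem forall_goFwd_eq_goBwd_iff (i : Fin n) :
    (∀ a : Fin n → α, goFwd n hn a = goBwd n hn a) ↔
      ∀ a : Fin n → α, goFwd n hn a ≤ sasaki (a (i + ⟨1, by omega⟩)) (a i) := by
  have : NeZero n := ⟨by omega⟩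
  refine ⟨fun h a => h a ▸ goBwd_le hn a i, fun h => ?_⟩
  have fwd_le_bwd : ∀ a, goFwd n hn a ≤ goBwd n hn a := fun a =>
    Finset.le_inf fun j _ => by
      have hj : i + ⟨1, by omega⟩ + (j - i) = j + ⟨1, by omega⟩ := by abel
      simpa only [goFwd_comp_add_right, hj, add_sub_cancel] using h (fun k => a (k + (j - i)))
  intro a
  refine le_antisymm (fwd_le_bwd a) ?_
  calc goBwd n hn a = goFwd n hn (fun j => a (-j)) := goBwd_eq_goFwd_comp_neg hn a
    _ ≤ goBwd n hn (fun j => a (-j)) := fwd_le_bwd _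
    _ = goFwd n hn a := by simp only [goBwd_eq_goFwd_comp_neg hn, neg_neg]

end Godowski

/-- In an orthomodular lattice (`n ≥ 3`), the n-Go equation holds for all
elements iff: for all `a₁, b₁, …, aₙ, bₙ` with the cyclic orthogonality
conditions `a₁ ⊥ b₁ ⊥ a₂ ⊥ b₂ ⊥ ⋯ ⊥ aₙ ⊥ bₙ ⊥ a₁`, one has
`(a₁⊔b₁) ⊓ ⋯ ⊓ (aₙ⊔bₙ) ≤ b₁ ⊔ a₂`. -/
theorem stmt_13 {α : Type*} [Ortholattice α]
    (hOML : ∀ a b : α, a ≤ b → a ⊔ (aᶜ ⊓ b) = b)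
    (n : ℕ) (hn : 3 ≤ n) :
    (∀ a : Fin n → α, goFwd n hn a = goBwd n hn a) ↔
      (∀ a b : Fin n → α,
        (∀ i : Fin n, a i ≤ (b i)ᶜ) →
        (∀ i : Fin n, b i ≤ (a (i + ⟨1, by omega⟩))ᶜ) →
        (Finset.univ.inf fun i : Fin n => a i ⊔ b i) ≤
          b ⟨0, by omega⟩ ⊔ a ⟨1, by omega⟩) := by
  rw [forall_goFwd_eq_goBwd_iff hn ⟨0, by omega⟩, Fin.mk_zero_add]
  constructor
  · intro hGo a b hab hba
    have hba₀ := hba ⟨0, by omega⟩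
    rw [Fin.mk_zero_add] at hba₀
    have hle : (Finset.univ.inf fun i => a i ⊔ b i) ≤ goFwd n hn (fun i => (a i)ᶜ) :=
      Finset.le_inf fun i _ => (Finset.inf_le (Finset.mem_univ i)).trans
        (Ortholattice.sup_le_sasaki_compl (hab i) (hba i))
    exact (le_inf (hle.trans (hGo _)) (Finset.inf_le (Finset.mem_univ _))).trans
      (Ortholattice.sasaki_compl_inf_sup_le hOML (hab _) hba₀)
  · intro hOrth a
    have h := hOrth (fun i => (a i)ᶜ) (fun i => a i ⊓ a (i + ⟨1, by omega⟩))
      (fun _ => Ortholattice.compl_anti inf_le_left)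
      (fun _ => Ortholattice.le_compl_comm.1 (Ortholattice.compl_anti inf_le_right))
    rw [Fin.mk_zero_add] at h
    exact h.trans_eq (by rw [sasaki, sup_comm, inf_comm])
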